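/- arXiv:math/0405238 — 3 statements merged into one kernel-verified Lean document; each statement's English description precedes it below -/
import Mathlib

section
/- Let $X$ be a finitely generated abelian group, $k$ a field, and let $M = \bigoplus_{\lambda \in X} M_\lambda$ be an $X$-graded module over an $X$-graded commutative $k$-algebra $R$. If $M$ is a noetherian $R$-module, then for any subgroup $Y \subseteq X$, the component $M_Y := \bigoplus_{\lambda \in Y} M_\lambda$ is a noetherian module over the subring $R_Y := \bigoplus_{\lambda \in Y} R_\lambda$. -/
/-!
Let `π` be the projection of `M` onto `M_Y = ⊕_{λ ∈ Y} M_λ` that kills the other graded pieces.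
Since `Y` is a subgroup, `R_λ M_μ ⊆ M_{λ+μ}` lies in `M_Y` for `μ ∈ Y` exactly when `λ ∈ Y`, so
`π (r • m) = π r • m` for `m ∈ M_Y`. Hence `π (span R F) = F` for every `R_Y`-stable subgroup
`F ≤ M_Y`, so `F ↦ span R F` is an order embedding, and ascending chains of such `F` stabilize
because their spans do in the noetherian module `M`.
-/

namespace DirectSum

section Proj

variable {X A : Type*} [DecidableEq X] [AddCommGroup A]
variable (𝒜 : X → AddSubgroup A) [Decomposition 𝒜]
variable (S : Set X) [DecidablePred (· ∈ S)]

noncomputable def projDegrees : A →+ A :=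
  (DirectSum.coeAddMonoidHom 𝒜).comp
    ((DFinsupp.filterAddMonoidHom (fun i => 𝒜 i) (· ∈ S)).comp
      (decomposeAddEquiv 𝒜).toAddMonoidHom)

variable {𝒜}

theorem projDegrees_of_mem {i : X} {x : A} (hx : x ∈ 𝒜 i) :
    projDegrees 𝒜 S x = if i ∈ S then x else 0 := by
  change DirectSum.coeAddMonoidHom 𝒜 (DFinsupp.filter (· ∈ S) (decompose 𝒜 x)) = _
  rw [decompose_of_mem 𝒜 hx, of, DFinsupp.singleAddHom_apply, DFinsupp.filter_single]
  split_ifs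
  · exact coeAddMonoidHom_of 𝒜 i ⟨x, hx⟩
  · exact map_zero _

variable (𝒜)

theorem projDegrees_mem (x : A) : projDegrees 𝒜 S x ∈ ⨆ (i : X) (_ : i ∈ S), 𝒜 i := by
  classical
  rw [← sum_support_decompose 𝒜 x, map_sum]
  refine AddSubgroup.sum_mem _ fun i _ => ?_
  rw [projDegrees_of_mem S (SetLike.coe_mem _)]
  split_ifs with hi
  · exact AddSubgroup.mem_iSup_of_mem i (AddSubgroup.mem_iSup_of_mem hi (SetLike.coe_mem _))
  · exact zero_mem _

variable {𝒜}

theorem projDegrees_eq_self {x : A} (hx : x ∈ ⨆ (i : X) (_ : i ∈ S), 𝒜 i) :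
    projDegrees 𝒜 S x = x := by
  rw [iSup_subtype'] at hx
  induction hx using AddSubgroup.iSup_induction' with
  | hp i x hxi => rw [projDegrees_of_mem S hxi, if_pos i.2]
  | h1 => exact map_zero _
  | hadd a b _ _ ha hb => rw [map_add, ha, hb]

end Proj

section GradedModule

variable {X R M : Type*} [AddCommGroup X] [DecidableEq X] [Ring R] [AddCommGroup M] [Module R M]
variable {𝒜 : X → AddSubgroup R} [Decomposition 𝒜]
variable {ℳ : X → AddSubgroup M} [Decomposition ℳ] [SetLike.GradedSMul 𝒜 ℳ]
variable {Y : AddSubgroup X} [DecidablePred (· ∈ (Y : Set X))]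

theorem projDegrees_smul_of_mem_of_mem (r : R) {i : X} (hi : i ∈ Y) {m : M} (hm : m ∈ ℳ i) :
    projDegrees ℳ Y (r • m) = projDegrees 𝒜 Y r • m := by
  classical
  rw [← sum_support_decompose 𝒜 r, Finset.sum_smul, map_sum, map_sum, Finset.sum_smul]
  refine Finset.sum_congr rfl fun j _ => ?_
  have hjm : (decompose 𝒜 r j : R) • m ∈ ℳ (j + i) :=
    SetLike.GradedSMul.smul_mem (decompose 𝒜 r j).2 hm
  rw [projDegrees_of_mem _ hjm, projDegrees_of_mem _ (decompose 𝒜 r j).2, ite_smul, zero_smul]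
  simp only [SetLike.mem_coe, Y.add_mem_cancel_right hi]

theorem projDegrees_smul_of_mem (r : R) {m : M} (hm : m ∈ ⨆ (i : X) (_ : i ∈ Y), ℳ i) :
    projDegrees ℳ Y (r • m) = projDegrees 𝒜 Y r • m := by
  rw [iSup_subtype'] at hm
  induction hm using AddSubgroup.iSup_induction' with
  | hp i m hmi => exact projDegrees_smul_of_mem_of_mem r i.2 hmi
  | h1 => simp only [smul_zero, map_zero]
  | hadd a b _ _ ha hb => rw [smul_add, map_add, ha, hb, smul_add]

variable {G : AddSubgroup M} (hG : G ≤ ⨆ (i : X) (_ : i ∈ Y), ℳ i)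
  (hG_smul : ∀ r ∈ (⨆ (i : X) (_ : i ∈ Y), 𝒜 i : AddSubgroup R), ∀ m ∈ G, r • m ∈ G)
include hG hG_smul

theorem projDegrees_mem_of_mem_span {x : M} (hx : x ∈ Submodule.span R (G : Set M)) :
    projDegrees ℳ Y x ∈ G := by
  obtain ⟨c, hc, rfl⟩ := Submodule.mem_span_set.mp hx
  rw [Finsupp.sum, map_sum]
  refine AddSubgroup.sum_mem _ fun m hm => ?_
  rw [projDegrees_smul_of_mem (𝒜 := 𝒜) (c m) (hG (hc hm))]
  exact hG_smul _ (projDegrees_mem 𝒜 Y (c m)) m (hc hm)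

theorem le_of_span_le_span {F : AddSubgroup M} (hF : F ≤ ⨆ (i : X) (_ : i ∈ Y), ℳ i)
    (h : Submodule.span R (F : Set M) ≤ Submodule.span R (G : Set M)) : F ≤ G := by
  intro x hx
  rw [← projDegrees_eq_self (Y : Set X) (hF hx)]
  exact projDegrees_mem_of_mem_span hG hG_smul (h (Submodule.subset_span hx))

end GradedModule

end DirectSum

theorem graded_part_noetherian_general
    (X R M : Type*) [AddCommGroup X] [DecidableEq X]
    [CommRing R] [AddCommGroup M] [Module R M]
    (𝒜 : X → AddSubgroup R) [GradedRing 𝒜]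
    (ℳ : X → AddSubgroup M) [DirectSum.Decomposition ℳ] [SetLike.GradedSMul 𝒜 ℳ]
    [IsNoetherian R M] (Y : AddSubgroup X) :
    ∀ f : ℕ → AddSubgroup M,
      (∀ n, f n ≤ ⨆ (lam : X) (_ : lam ∈ Y), ℳ lam) →
      (∀ n, f n ≤ f (n + 1)) →
      (∀ n, ∀ r ∈ (⨆ (lam : X) (_ : lam ∈ Y), 𝒜 lam : AddSubgroup R),
        ∀ m ∈ f n, r • m ∈ f n) →
      ∃ N, ∀ n ≥ N, f n = f N := by
  classical
  intro f hf_le hf_succ hf_smul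
  have hf : Monotone f := monotone_nat_of_le_succ hf_succ
  let spans : ℕ →o Submodule R M :=
    ⟨fun n => Submodule.span R (f n : Set M), fun _ _ hab => Submodule.span_mono (hf hab)⟩
  obtain ⟨N, hN⟩ := monotone_stabilizes_iff_noetherian.mpr ‹_› spans
  exact ⟨N, fun n hn => le_antisymm
    (DirectSum.le_of_span_le_span (hf_le N) (hf_smul N) (hf_le n) (hN n hn).ge) (hf hn)⟩

/-- Let `R` be a commutative `k`-algebra graded by a finitely generated abelian group `X`
and `M` an `X`-graded `R`-module which is noetherian. Then for any subgroup `Y ≤ X`, the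
part `M_Y = ⊕_{λ ∈ Y} M_λ` is a noetherian module over `R_Y = ⊕_{λ ∈ Y} R_λ`, i.e. every
ascending chain of `R_Y`-stable subgroups of `M_Y` stabilizes. -/
theorem graded_part_noetherian
    (k X R M : Type*) [Field k] [AddCommGroup X] [DecidableEq X] [AddGroup.FG X]
    [CommRing R] [Algebra k R] [AddCommGroup M] [Module R M]
    (𝒜 : X → AddSubgroup R) [GradedRing 𝒜]
    (ℳ : X → AddSubgroup M) [DirectSum.Decomposition ℳ] [SetLike.GradedSMul 𝒜 ℳ]
    [IsNoetherian R M] (Y : AddSubgroup X) :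
    ∀ f : ℕ → AddSubgroup M,
      (∀ n, f n ≤ ⨆ (lam : X) (_ : lam ∈ Y), ℳ lam) →
      (∀ n, f n ≤ f (n + 1)) →
      (∀ n, ∀ r ∈ (⨆ (lam : X) (_ : lam ∈ Y), 𝒜 lam : AddSubgroup R),
        ∀ m ∈ f n, r • m ∈ f n) →
      ∃ N, ∀ n ≥ N, f n = f N :=
  graded_part_noetherian_general X R M 𝒜 ℳ Y
end

section
/- Let $A$ be a commutative ring with an exhaustive filtration by additive subgroups $A_{\leq 0} \subseteq A_{\leq 1} \subseteq \cdots$ with $A = \bigcup_i A_{\leq i}$ and $A_{\leq i} A_{\leq j} \subseteq A_{\leq i+j}$, and let $M$ be an $A$-module with a compatible filtration $M_{\leq 0} \subseteq M_{\leq 1} \subseteq \cdots$, $M = \bigcup_i M_{\leq i}$, $A_{\leq i} M_{\leq j} \subseteq M_{\leq i+j}$. If the associated graded module $\operatorname{gr} M = \bigoplus_i M_{\leq i}/M_{\leq i-1}$ is a noetherian $\operatorname{gr} A$-module, then $M$ is a noetherian $A$-module. -/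
/-!
Send a submodule `N ⊆ M` to `gr N ⊆ gr M`, the associated graded of the induced filtration
`N ∩ FM i`; it is a `gr A`-submodule because `gr A` is additively spanned by homogeneous
elements. This map is strictly monotone: if `N ⊆ N'` and `gr N' ⊆ gr N`, every `m ∈ N' ∩ FM i`
agrees modulo `FM (i - 1)` with some `m' ∈ N`, and `m - m' ∈ N' ∩ FM (i - 1)` lies in `N` by
induction on `i`. So a strictly increasing chain in `M` would give one in `gr M`.
-/

open DirectSum

theorem DirectSum.Decomposition.iSup_inf_le {ι M : Type*} [DecidableEq ι] [AddCommGroup M]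
    (ℳ : ι → AddSubgroup M) [Decomposition ℳ] {T : ι → AddSubgroup M} (hT : ∀ j, T j ≤ ℳ j)
    (i : ι) : (⨆ j, T j) ⊓ ℳ i ≤ T i := by
  rintro x ⟨hx, hxi⟩
  suffices (decompose ℳ x i : M) ∈ T i by rwa [decompose_of_mem_same ℳ hxi] at this
  refine AddSubgroup.iSup_induction T (C := fun y => (decompose ℳ y i : M) ∈ T i) hx
    (fun j y hy => ?_) ?_ (fun y z hy hz => ?_)
  · obtain rfl | hji := eq_or_ne j i
    · rwa [decompose_of_mem_same ℳ (hT j hy)]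
    · rw [decompose_of_mem_ne ℳ (hT j hy) hji]
      exact zero_mem _
  · simp
  · simpa using add_mem hy hz

theorem AddSubgroup.smul_mem_iSup_of_decomposition {R M ι κ : Type*} [DecidableEq ι] [Ring R]
    [AddCommGroup M] [Module R M] (𝒜 : ι → AddSubgroup R) [Decomposition 𝒜]
    {T : κ → AddSubgroup M} (hT : ∀ i j, ∀ a ∈ 𝒜 i, ∀ x ∈ T j, a • x ∈ ⨆ k, T k)
    (r : R) {x : M} (hx : x ∈ ⨆ k, T k) : r • x ∈ ⨆ k, T k := by
  induction r using Decomposition.inductionOn 𝒜 with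
  | zero => simp
  | add r s hr hs => simpa [add_smul] using add_mem hr hs
  | @homogeneous i a =>
    refine AddSubgroup.iSup_induction T (C := fun y => (a : R) • y ∈ ⨆ k, T k) hx
      (fun j y hy => hT i j a a.2 y hy) ?_ ?_
    · simp
    · intro y z hy hz
      simpa [smul_add] using add_mem hy hz

section FilteredModule

variable {M GM : Type*} [AddCommGroup M] [AddCommGroup GM] {FM : ℕ → AddSubgroup M}

/-- `(gr H)ᵢ` for the filtration `H ∩ FM i` induced on `H`. -/
def grPiece (ψ : ∀ i, FM i →+ GM) (H : AddSubgroup M) (i : ℕ) : AddSubgroup GM :=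
  (H.addSubgroupOf (FM i)).map (ψ i)

variable {ψ : ∀ i, FM i →+ GM}

theorem mem_grPiece {H : AddSubgroup M} {i : ℕ} {x : GM} :
    x ∈ grPiece ψ H i ↔ ∃ m : FM i, (m : M) ∈ H ∧ ψ i m = x := by
  simp [grPiece, AddSubgroup.mem_addSubgroupOf]

theorem grPiece_mono {H H' : AddSubgroup M} (h : H ≤ H') (i : ℕ) :
    grPiece ψ H i ≤ grPiece ψ H' i :=
  AddSubgroup.map_mono (AddSubgroup.addSubgroupOf_mono _ h)

theorem grPiece_le_range (H : AddSubgroup M) (i : ℕ) : grPiece ψ H i ≤ (ψ i).range :=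
  AddSubgroup.map_le_range _ _

theorem mem_of_grPiece_le_of_mem_filtration
    (hψker0 : ∀ m : FM 0, ψ 0 m = 0 ↔ (m : M) = 0)
    (hψker : ∀ (i : ℕ) (m : FM (i + 1)), ψ (i + 1) m = 0 ↔ (m : M) ∈ FM i)
    {H H' : AddSubgroup M} (hle : H ≤ H') (hgr : ∀ i, grPiece ψ H' i ≤ grPiece ψ H i)
    (i : ℕ) {m : M} (hmi : m ∈ FM i) (hm : m ∈ H') : m ∈ H := by
  have lift : ∀ j (n : FM j), (n : M) ∈ H' → ∃ n' : FM j, (n' : M) ∈ H ∧ ψ j (n - n') = 0 := by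
    intro j n hn
    obtain ⟨n', hn', hψ⟩ := mem_grPiece.1 (hgr j (mem_grPiece.2 ⟨n, hn, rfl⟩))
    exact ⟨n', hn', by rw [map_sub, hψ, sub_self]⟩
  induction i generalizing m with
  | zero =>
    obtain ⟨m', hm', hker⟩ := lift 0 ⟨m, hmi⟩ hm
    have hmm' : m - m' = 0 := (hψker0 _).1 hker
    rwa [sub_eq_zero.1 hmm']
  | succ i ih =>
    obtain ⟨m', hm', hker⟩ := lift (i + 1) ⟨m, hmi⟩ hm
    have hmm' : m - m' ∈ FM i := (hψker i _).1 hker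
    rw [← sub_add_cancel m m']
    exact add_mem (ih hmm' (sub_mem hm (hle hm'))) hm'

theorem le_of_grPiece_le (hFMmono : Monotone FM) (hFMex : (⨆ i, FM i) = ⊤)
    (hψker0 : ∀ m : FM 0, ψ 0 m = 0 ↔ (m : M) = 0)
    (hψker : ∀ (i : ℕ) (m : FM (i + 1)), ψ (i + 1) m = 0 ↔ (m : M) ∈ FM i)
    {H H' : AddSubgroup M} (hle : H ≤ H') (hgr : ∀ i, grPiece ψ H' i ≤ grPiece ψ H i) :
    H' ≤ H := by
  intro m hm
  obtain ⟨i, hmi⟩ := (AddSubgroup.mem_iSup_of_directed hFMmono.directed_le).1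
    (hFMex ▸ AddSubgroup.mem_top m)
  exact mem_of_grPiece_le_of_mem_filtration hψker0 hψker hle hgr i hmi hm

def grSubmodule (GA : Type*) [Ring GA] [Module GA GM] (ψ : ∀ i, FM i →+ GM) {A : Type*} [Ring A]
    [Module A M] (N : Submodule A M) : Submodule GA GM :=
  Submodule.span GA (⋃ i, (grPiece ψ N.toAddSubgroup i : Set GM))

variable {GA : Type*} [Ring GA] [Module GA GM] {A : Type*} [Ring A] [Module A M]
  {FA : ℕ → AddSubgroup A} {𝒜 : ℕ → AddSubgroup GA} [Decomposition 𝒜] {φ : ∀ i, FA i →+ GA}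

theorem mem_grSubmodule_iff (hφrange : ∀ i, (φ i).range = 𝒜 i)
    (hFAM : ∀ {i j : ℕ} {a : A} {m : M}, a ∈ FA i → m ∈ FM j → a • m ∈ FM (i + j))
    (hψsmul : ∀ (i j : ℕ) (a : FA i) (m : FM j),
      ψ (i + j) ⟨(a : A) • (m : M), hFAM a.2 m.2⟩ = φ i a • ψ j m)
    {N : Submodule A M} {x : GM} :
    x ∈ grSubmodule GA ψ N ↔ x ∈ ⨆ i, grPiece ψ N.toAddSubgroup i := by
  refine ⟨fun hx => ?_, fun hx => ?_⟩
  · induction hx using Submodule.span_induction with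
    | mem y hy =>
      obtain ⟨i, hy⟩ := Set.mem_iUnion.1 hy
      exact AddSubgroup.mem_iSup_of_mem i hy
    | zero => exact zero_mem _
    | add y z _ _ hy hz => exact add_mem hy hz
    | smul r y _ hy =>
      refine AddSubgroup.smul_mem_iSup_of_decomposition 𝒜 (fun i j a ha y hy => ?_) r hy
      rw [← hφrange] at ha
      obtain ⟨a, rfl⟩ := ha
      obtain ⟨m, hm, rfl⟩ := mem_grPiece.1 hy
      rw [← hψsmul]
      exact AddSubgroup.mem_iSup_of_mem (i + j) (mem_grPiece.2 ⟨_, N.smul_mem _ hm, rfl⟩)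
  · refine AddSubgroup.iSup_induction _ (C := (· ∈ grSubmodule GA ψ N)) hx
      (fun i y hy => Submodule.subset_span (Set.mem_iUnion.2 ⟨i, hy⟩)) (zero_mem _)
      (fun _ _ => add_mem)

theorem grPiece_le_of_grSubmodule_le (hφrange : ∀ i, (φ i).range = 𝒜 i)
    (hFAM : ∀ {i j : ℕ} {a : A} {m : M}, a ∈ FA i → m ∈ FM j → a • m ∈ FM (i + j))
    (hψsmul : ∀ (i j : ℕ) (a : FA i) (m : FM j),
      ψ (i + j) ⟨(a : A) • (m : M), hFAM a.2 m.2⟩ = φ i a • ψ j m)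
    (ℳ : ℕ → AddSubgroup GM) [Decomposition ℳ] (hψrange : ∀ i, (ψ i).range = ℳ i)
    {N N' : Submodule A M} (hgr : grSubmodule GA ψ N' ≤ grSubmodule GA ψ N) (i : ℕ) :
    grPiece ψ N'.toAddSubgroup i ≤ grPiece ψ N.toAddSubgroup i := by
  have homogeneous (H : AddSubgroup M) (j : ℕ) : grPiece ψ H j ≤ ℳ j :=
    hψrange j ▸ grPiece_le_range H j
  intro x hx
  have hxN' : x ∈ grSubmodule GA ψ N' := Submodule.subset_span (Set.mem_iUnion.2 ⟨i, hx⟩)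
  exact Decomposition.iSup_inf_le ℳ (homogeneous _) i
    ⟨(mem_grSubmodule_iff hφrange hFAM hψsmul).1 (hgr hxN'), homogeneous _ i hx⟩

theorem grSubmodule_strictMono (hFMmono : Monotone FM) (hFMex : (⨆ i, FM i) = ⊤)
    (hψker0 : ∀ m : FM 0, ψ 0 m = 0 ↔ (m : M) = 0)
    (hψker : ∀ (i : ℕ) (m : FM (i + 1)), ψ (i + 1) m = 0 ↔ (m : M) ∈ FM i)
    (hφrange : ∀ i, (φ i).range = 𝒜 i)
    (hFAM : ∀ {i j : ℕ} {a : A} {m : M}, a ∈ FA i → m ∈ FM j → a • m ∈ FM (i + j))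
    (hψsmul : ∀ (i j : ℕ) (a : FA i) (m : FM j),
      ψ (i + j) ⟨(a : A) • (m : M), hFAM a.2 m.2⟩ = φ i a • ψ j m)
    (ℳ : ℕ → AddSubgroup GM) [Decomposition ℳ] (hψrange : ∀ i, (ψ i).range = ℳ i) :
    StrictMono (grSubmodule GA ψ : Submodule A M → Submodule GA GM) := by
  intro N N' hlt
  have hle : N.toAddSubgroup ≤ N'.toAddSubgroup := (Submodule.toAddSubgroup_le _ _).2 hlt.le
  refine lt_of_le_not_ge (Submodule.span_mono (Set.iUnion_mono (grPiece_mono hle))) fun hgr => ?_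
  exact hlt.not_ge <| (Submodule.toAddSubgroup_le _ _).1 <|
    le_of_grPiece_le hFMmono hFMex hψker0 hψker hle
      (grPiece_le_of_grSubmodule_le hφrange hFAM hψsmul ℳ hψrange hgr)

end FilteredModule

theorem noetherian_of_grading_noetherian_general
    (A M : Type*) [CommRing A] [AddCommGroup M] [Module A M]
    (FA : ℕ → AddSubgroup A) (FM : ℕ → AddSubgroup M)
    (hFMmono : Monotone FM) (hFMex : (⨆ i, FM i) = ⊤)
    (hFAM : ∀ {i j : ℕ} {a : A} {m : M}, a ∈ FA i → m ∈ FM j → a • m ∈ FM (i + j))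
    (GA GM : Type*) [Ring GA] [AddCommGroup GM] [Module GA GM]
    (𝒜 : ℕ → AddSubgroup GA) [GradedRing 𝒜]
    (ℳ : ℕ → AddSubgroup GM) [DirectSum.Decomposition ℳ]
    (φ : ∀ i : ℕ, (FA i) →+ GA) (ψ : ∀ i : ℕ, (FM i) →+ GM)
    (hφrange : ∀ i, (φ i).range = 𝒜 i)
    (hψrange : ∀ i, (ψ i).range = ℳ i)
    (hψker0 : ∀ m : FM 0, ψ 0 m = 0 ↔ (m : M) = 0)
    (hψker : ∀ (i : ℕ) (m : FM (i + 1)), ψ (i + 1) m = 0 ↔ (m : M) ∈ FM i)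
    (hψsmul : ∀ (i j : ℕ) (a : FA i) (m : FM j),
      ψ (i + j) ⟨(a : A) • (m : M), hFAM a.2 m.2⟩ = φ i a • ψ j m)
    (hnoeth : IsNoetherian GA GM) :
    IsNoetherian A M := by
  rw [isNoetherian_iff'] at hnoeth ⊢
  exact (grSubmodule_strictMono hFMmono hFMex hψker0 hψker hφrange hFAM hψsmul ℳ
    hψrange).wellFoundedGT

/-- Let `A` be a commutative ring with an exhaustive multiplicative filtration
`FA 0 ⊆ FA 1 ⊆ ⋯` and `M` an `A`-module with a compatible exhaustive filtration `FM`.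
Let `GA` (with grading `𝒜`) and `GM` (with grading `ℳ`) be realizations of the
associated graded ring and module, given by additive maps `φ i : FA i → GA` and
`ψ i : FM i → GM` onto the graded pieces whose kernels are the previous filtration
steps and which are compatible with multiplication and the module structure.
If `GM` is a noetherian `GA`-module, then `M` is a noetherian `A`-module. -/
theorem noetherian_of_grading_noetherian
    (A M : Type*) [CommRing A] [AddCommGroup M] [Module A M]
    (FA : ℕ → AddSubgroup A) (FM : ℕ → AddSubgroup M)
    (hFAmono : Monotone FA) (hFAex : (⨆ i, FA i) = ⊤) (hFA1 : (1 : A) ∈ FA 0)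
    (hFAmul : ∀ {i j : ℕ} {a b : A}, a ∈ FA i → b ∈ FA j → a * b ∈ FA (i + j))
    (hFMmono : Monotone FM) (hFMex : (⨆ i, FM i) = ⊤)
    (hFAM : ∀ {i j : ℕ} {a : A} {m : M}, a ∈ FA i → m ∈ FM j → a • m ∈ FM (i + j))
    (GA GM : Type*) [Ring GA] [AddCommGroup GM] [Module GA GM]
    (𝒜 : ℕ → AddSubgroup GA) [GradedRing 𝒜]
    (ℳ : ℕ → AddSubgroup GM) [DirectSum.Decomposition ℳ] [SetLike.GradedSMul 𝒜 ℳ]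
    (φ : ∀ i : ℕ, (FA i) →+ GA) (ψ : ∀ i : ℕ, (FM i) →+ GM)
    (hφrange : ∀ i, (φ i).range = 𝒜 i)
    (hφker0 : ∀ a : FA 0, φ 0 a = 0 ↔ (a : A) = 0)
    (hφker : ∀ (i : ℕ) (a : FA (i + 1)), φ (i + 1) a = 0 ↔ (a : A) ∈ FA i)
    (hφmul : ∀ (i j : ℕ) (a : FA i) (b : FA j),
      φ (i + j) ⟨(a : A) * (b : A), hFAmul a.2 b.2⟩ = φ i a * φ j b)
    (hψrange : ∀ i, (ψ i).range = ℳ i)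
    (hψker0 : ∀ m : FM 0, ψ 0 m = 0 ↔ (m : M) = 0)
    (hψker : ∀ (i : ℕ) (m : FM (i + 1)), ψ (i + 1) m = 0 ↔ (m : M) ∈ FM i)
    (hψsmul : ∀ (i j : ℕ) (a : FA i) (m : FM j),
      ψ (i + j) ⟨(a : A) • (m : M), hFAM a.2 m.2⟩ = φ i a • ψ j m)
    (hnoeth : IsNoetherian GA GM) :
    IsNoetherian A M :=
  noetherian_of_grading_noetherian_general A M FA FM hFMmono hFMex hFAM GA GM 𝒜 ℳ φ ψ hφrange
    hψrange hψker0 hψker hψsmul hnoeth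
end

section
/- Let $k$ be a field and let $P = k[x_1,\dots,x_n]$ be graded by a finitely generated abelian group $X$, with each $x_i$ homogeneous of degree $d_i \in X$. Then the invariant ring $P_0$ (the sum of the homogeneous components of degree $0$) is a finitely generated $k$-algebra. -/
/-- Let `P = k[x₁,…,xₙ]` be graded by a finitely generated abelian group `X` with
`deg xᵢ = d i`. Then the degree-zero part `P₀` (spanned by the monomials of weight `0`)
is a finitely generated `k`-algebra: it is generated by finitely many weight-`0`
monomials. -/
theorem degree_zero_part_finitely_generated
    (k : Type*) [Field k] (X : Type*) [AddCommGroup X] [AddGroup.FG X]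
    (n : ℕ) (d : Fin n → X) :
    ∃ S : Finset (Fin n →₀ ℕ),
      (∀ a ∈ S, (∑ i : Fin n, (a i) • d i) = 0) ∧
      Algebra.adjoin k ((fun a : Fin n →₀ ℕ => (MvPolynomial.monomial a (1 : k))) '' ↑S)
        = Algebra.adjoin k {p : MvPolynomial (Fin n) k |
            ∃ a : Fin n →₀ ℕ, (∑ i : Fin n, (a i) • d i) = 0
              ∧ p = MvPolynomial.monomial a 1} := by
  classical
  set φ : (Fin n →₀ ℕ) → X := fun a => ∑ i : Fin n, (a i) • d i with hφ
  have hφadd : ∀ a b, φ (a + b) = φ a + φ b := by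
    intro a b
    simp [φ, Finsupp.add_apply, add_smul, Finset.sum_add_distrib]
  set K : Set (Fin n →₀ ℕ) := {a | φ a = 0} with hK
  -- fullness of K
  have hfull : ∀ a b : Fin n →₀ ℕ, a ∈ K → b ∈ K → a ≤ b → b - a ∈ K := by
    intro a b ha hb hab
    have h1 : φ (b - a + a) = φ (b - a) + φ a := hφadd _ _
    rw [tsub_add_cancel_of_le hab] at h1
    have : φ (b - a) = 0 := by
      rw [hb, ha, add_zero] at h1; exact h1.symm
    exact this
  -- the set of minimal nonzero elements of K
  set M : Set (Fin n →₀ ℕ) :=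
    {m | m ∈ K ∧ m ≠ 0 ∧ ∀ m' ∈ K, m' ≠ 0 → m' ≤ m → m' = m} with hM
  have hanti : IsAntichain (· ≤ ·) M := by
    intro m hm m' hm' hne hle
    exact hne (hm'.2.2 m hm.1 hm.2.1 hle)
  have hMfin : M.Finite := hanti.finite_of_partiallyWellOrderedOn (Set.isPWO_of_wellQuasiOrderedLE M)
  -- every element of K lies in the additive monoid closure of M
  have hclos : ∀ a ∈ K, a ∈ AddSubmonoid.closure M := by
    intro a ha
    induction a using WellFoundedLT.induction with
    | ind a IH =>
      by_cases h0 : a = 0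
      · subst h0; exact (AddSubmonoid.closure M).zero_mem
      · -- pick a minimal element of {x ∈ K | x ≠ 0 ∧ x ≤ a}
        obtain ⟨m, ⟨hmK, hm0, hma⟩, hmmin⟩ :=
          (IsWellFounded.wf (r := ((· < ·) : (Fin n →₀ ℕ) → (Fin n →₀ ℕ) → Prop))).has_min
            {x | x ∈ K ∧ x ≠ 0 ∧ x ≤ a} ⟨a, ha, h0, le_rfl⟩
        have hmM : m ∈ M := by
          refine ⟨hmK, hm0, fun m' hm'K hm'0 hm'le => ?_⟩
          by_contra hne
          exact hmmin m' ⟨hm'K, hm'0, hm'le.trans hma⟩ (lt_of_le_of_ne hm'le hne)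
        have hsub : a - m ∈ K := hfull m a hmK ha hma
        have hlt : a - m < a := by
          refine lt_of_le_of_ne tsub_le_self fun heq => ?_
          have := tsub_add_cancel_of_le hma
          rw [heq] at this
          exact hm0 (by
            have := add_left_cancel (a := a) (b := m) (c := 0) (by simpa using this)
            exact this)
        have h1 : a - m ∈ AddSubmonoid.closure M := IH _ hlt hsub
        have h2 : m ∈ AddSubmonoid.closure M := AddSubmonoid.subset_closure hmM
        have : a - m + m = a := tsub_add_cancel_of_le hma
        rw [← this]
        exact (AddSubmonoid.closure M).add_mem h1 h2
  refine ⟨hMfin.toFinset, ?_, ?_⟩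
  · intro a haS
    exact (hMfin.mem_toFinset.mp haS).1
  · apply le_antisymm
    · apply Algebra.adjoin_mono
      rintro p ⟨a, haS, rfl⟩
      exact ⟨a, (hMfin.mem_toFinset.mp haS).1, rfl⟩
    · rw [Algebra.adjoin_le_iff]
      rintro p ⟨a, ha, rfl⟩
      have ha' : a ∈ AddSubmonoid.closure M := hclos a ha
      clear ha
      induction ha' using AddSubmonoid.closure_induction with
      | mem m hm =>
          exact Algebra.subset_adjoin ⟨m, hMfin.mem_toFinset.mpr hm, rfl⟩
      | zero =>
          simpa using (Algebra.adjoin k _).one_mem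
      | add x y hx hy hx' hy' =>
          have : (MvPolynomial.monomial (x + y) (1 : k))
              = MvPolynomial.monomial x 1 * MvPolynomial.monomial y 1 := by
            simp [MvPolynomial.monomial_mul]
          rw [this]
          exact mul_mem hx' hy'
end
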